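/- The signed Roman domination number of the Kneser graph K_{9,2} equals 3, i.e. γ_sR(K_{9,2}) = 3. -/

import Mathlib

def kneserGraph (n k : ℕ) : SimpleGraph {s : Finset (Fin n) // s.card = k} where
  Adj a b := a ≠ b ∧ Disjoint a.1 b.1
  symm := ⟨fun a b h => ⟨h.1.symm, h.2.symm⟩⟩
  loopless := ⟨fun a h => h.1 rfl⟩

def IsRDF {V : Type*} (G : SimpleGraph V) (f : V → ℕ) : Prop :=
  (∀ v, f v ≤ 2) ∧ ∀ v, f v = 0 → ∃ u, G.Adj v u ∧ f u = 2

noncomputable def romanDomNum {V : Type*} [Fintype V] (G : SimpleGraph V) : ℕ :=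
  sInf {w | ∃ f, IsRDF G f ∧ ∑ v, f v = w}

open Classical in
def IsTRDF {V : Type*} [Fintype V] (G : SimpleGraph V) (f : V → ℕ) : Prop :=
  IsRDF G f ∧ ∀ v, 1 ≤ ∑ u ∈ Finset.univ.filter (fun u => G.Adj v u), f u

noncomputable def totalRomanDomNum {V : Type*} [Fintype V] (G : SimpleGraph V) : ℕ :=
  sInf {w | ∃ f, IsTRDF G f ∧ ∑ v, f v = w}

open Classical in
def IsSRDF {V : Type*} [Fintype V] (G : SimpleGraph V) (f : V → ℤ) : Prop :=
  (∀ v, f v = -1 ∨ f v = 1 ∨ f v = 2) ∧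
  (∀ v, f v = -1 → ∃ u, G.Adj v u ∧ f u = 2) ∧
  (∀ v, 1 ≤ f v + ∑ u ∈ Finset.univ.filter (fun u => G.Adj v u), f u)

noncomputable def signedRomanDomNum {V : Type*} [Fintype V] (G : SimpleGraph V) : ℤ :=
  sInf {w | ∃ f, IsSRDF G f ∧ ∑ v, f v = w}

def IsDominatingSet {V : Type*} (G : SimpleGraph V) (S : Finset V) : Prop :=
  ∀ v, v ∉ S → ∃ u ∈ S, G.Adj v u

noncomputable def domNum {V : Type*} [Fintype V] (G : SimpleGraph V) : ℕ :=
  sInf {m | ∃ S : Finset V, IsDominatingSet G S ∧ S.card = m}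

/-!
For a signed Roman dominating function `f` of weight `w` on `K(9,2)` let `S a` be the sum of `f`
over the pairs containing `a`, so that `∑ a, S a = 2 w`. The vertices not adjacent to `{a, b}` are
exactly the pairs meeting it, so the closed-neighbourhood condition at `{a, b}` reads
`S a + S b ≤ w - 1 + 2 f {a, b}`. Summing over the eight `b ≠ a` gives `5 S a ≤ 6 w - 8`, and
summing that over `a` gives `44 w ≥ 72`, so `w ≥ 2`; for `w = 2` every `S a` would be `≤ 0`,
contradicting `∑ a, S a = 4`. An explicit function of weight `3` shows the bound is attained.
-/

open Finset

instance (n k : ℕ) : DecidableRel (kneserGraph n k).Adj :=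
  fun a b => inferInstanceAs (Decidable (a ≠ b ∧ Disjoint a.1 b.1))

section PairSums

variable {α M : Type*} [Fintype α] [DecidableEq α] [AddCommMonoid M]

def pointSum (f : {s : Finset α // s.card = 2} → M) (a : α) : M :=
  ∑ v with a ∈ v.1, f v

theorem sum_pointSum (f : {s : Finset α // s.card = 2} → M) :
    ∑ a, pointSum f a = 2 • ∑ v, f v := by
  simp only [pointSum, sum_filter]
  rw [sum_comm, smul_sum]
  refine sum_congr rfl fun v _ => ?_
  rw [sum_ite_mem, univ_inter, sum_const, v.2]

theorem sum_pointSum_eq_sum_card_inter_nsmul (f : {s : Finset α // s.card = 2} → M)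
    (s : Finset α) : ∑ x ∈ s, pointSum f x = ∑ u, #(s ∩ u.1) • f u := by
  simp only [pointSum, sum_filter]
  rw [sum_comm]
  refine sum_congr rfl fun u _ => ?_
  rw [sum_ite_mem, sum_const]

theorem sum_filter_mem_eq_sum_erase (a : α) (g : Finset α → M) :
    ∑ v : {s : Finset α // s.card = 2} with a ∈ v.1, g v.1 = ∑ b ∈ univ.erase a, g {a, b} := by
  symm
  refine sum_bij (fun b hb => ⟨{a, b}, card_pair (ne_of_mem_erase hb).symm⟩) ?_ ?_ ?_ ?_
  · simp
  · intro b hb b' _ h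
    have hb' : b ∈ ({a, b'} : Finset α) := by
      rw [← show ({a, b} : Finset α) = {a, b'} from congrArg Subtype.val h]; simp
    simpa [ne_of_mem_erase hb] using hb'
  · rintro ⟨v, hv⟩ ha
    obtain ⟨x, y, hxy, rfl⟩ := card_eq_two.mp hv
    simp only [mem_filter, mem_univ, true_and, mem_insert, mem_singleton] at ha
    rcases ha with rfl | rfl
    · exact ⟨y, by simpa using hxy.symm, rfl⟩
    · exact ⟨x, by simpa using hxy, Subtype.ext (pair_comm _ _)⟩
  · simp

end PairSums

section KneserTwo

variable {n : ℕ}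

theorem card_inter_eq_one_of_ne {u v : {s : Finset (Fin n) // s.card = 2}} (huv : u ≠ v)
    (h : ¬ Disjoint v.1 u.1) : #(v.1 ∩ u.1) = 1 := by
  have hpos : 0 < #(v.1 ∩ u.1) := card_pos.mpr (not_disjoint_iff_nonempty_inter.mp h)
  have hle : #(v.1 ∩ u.1) ≤ 2 := (card_le_card inter_subset_left).trans v.2.le
  have hne : #(v.1 ∩ u.1) ≠ 2 := by
    intro h2
    have hvu : v.1 ∩ u.1 = v.1 := eq_of_subset_of_card_le inter_subset_left (by rw [v.2, h2])
    have hsub : v.1 ⊆ u.1 := by rw [← hvu]; exact inter_subset_right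
    exact huv (Subtype.ext (eq_of_subset_of_card_le hsub (by rw [u.2, v.2])).symm)
  omega

/-- Every vertex other than `v` is either a neighbour of `v` or meets `v` in one point. -/
theorem kneserGraph_two_sum_add_eq (f : {s : Finset (Fin n) // s.card = 2} → ℤ)
    (v : {s : Finset (Fin n) // s.card = 2}) :
    ∑ u, f u + 2 * f v =
      (f v + ∑ u with (kneserGraph n 2).Adj v u, f u) + ∑ x ∈ v.1, pointSum f x := by
  rw [sum_pointSum_eq_sum_card_inter_nsmul, sum_filter, ← Fintype.sum_ite_eq' v f, mul_sum,
    ← sum_add_distrib, ← sum_add_distrib, ← sum_add_distrib]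
  refine sum_congr rfl fun u _ => ?_
  by_cases huv : u = v
  · subst huv
    simp [u.2]
  by_cases hdisj : Disjoint v.1 u.1
  · have hadj : (kneserGraph n 2).Adj v u := ⟨Ne.symm huv, hdisj⟩
    simp [huv, hadj, disjoint_iff_inter_eq_empty.mp hdisj]
  · have hadj : ¬ (kneserGraph n 2).Adj v u := fun h => hdisj h.2
    simp [huv, hadj, card_inter_eq_one_of_ne huv hdisj]

theorem IsSRDF.sum_pointSum_le {f : {s : Finset (Fin n) // s.card = 2} → ℤ}
    (hf : IsSRDF (kneserGraph n 2) f) (v : {s : Finset (Fin n) // s.card = 2}) :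
    ∑ x ∈ v.1, pointSum f x ≤ ∑ u, f u - 1 + 2 * f v := by
  have hv := hf.2.2 v
  rw [filter_congr_decidable] at hv
  linarith [kneserGraph_two_sum_add_eq f v]

theorem IsSRDF.mul_pointSum_le {f : {s : Finset (Fin n) // s.card = 2} → ℤ}
    (hf : IsSRDF (kneserGraph n 2) f) (a : Fin n) :
    (n - 4 : ℤ) * pointSum f a ≤ (n - 3) * ∑ u, f u - (n - 1) := by
  have hsum := sum_le_sum fun v (_ : v ∈ univ.filter fun v => a ∈ v.1) => hf.sum_pointSum_le v
  have hcard : (#(univ.erase a) : ℤ) = n - 1 := by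
    rw [card_erase_of_mem (mem_univ a), card_univ, Fintype.card_fin, Nat.cast_pred a.pos]
  have hlhs : ∑ v : {s : Finset (Fin n) // s.card = 2} with a ∈ v.1, ∑ x ∈ v.1, pointSum f x =
      (n - 2) * pointSum f a + 2 * ∑ u, f u := by
    rw [sum_filter_mem_eq_sum_erase a fun s => ∑ x ∈ s, pointSum f x,
      sum_congr rfl fun b hb => sum_pair (ne_of_mem_erase hb).symm, sum_add_distrib, sum_const,
      nsmul_eq_mul, hcard, sum_erase_eq_sub (mem_univ a), sum_pointSum, two_nsmul]
    ring
  have hrhs : ∑ v : {s : Finset (Fin n) // s.card = 2} with a ∈ v.1, (∑ u, f u - 1 + 2 * f v) =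
      (n - 1) * (∑ u, f u - 1) + 2 * pointSum f a := by
    have hfilter : #(univ.filter fun v : {s : Finset (Fin n) // s.card = 2} => a ∈ v.1) =
        #(univ.erase a) := by
      simpa only [card_eq_sum_ones] using sum_filter_mem_eq_sum_erase a fun _ => 1
    rw [sum_add_distrib, sum_const, hfilter, ← mul_sum, nsmul_eq_mul, hcard, pointSum]
  linarith

end KneserTwo

theorem IsSRDF.three_le_sum {f : {s : Finset (Fin 9) // s.card = 2} → ℤ}
    (hf : IsSRDF (kneserGraph 9 2) f) : 3 ≤ ∑ v, f v := by
  have hpoint : ∀ a, 5 * pointSum f a ≤ 6 * ∑ v, f v - 8 := fun a => by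
    have := hf.mul_pointSum_le a
    norm_num at this
    linarith
  have htotal : 2 * ∑ v, f v = ∑ a, pointSum f a := by rw [sum_pointSum, two_nsmul, two_mul]
  have hsum : 5 * (2 * ∑ v, f v) ≤ 9 * (6 * ∑ v, f v - 8) :=
    calc 5 * (2 * ∑ v, f v) = ∑ a, 5 * pointSum f a := by rw [htotal, mul_sum]
      _ ≤ ∑ _a : Fin 9, (6 * ∑ v, f v - 8) := sum_le_sum fun a _ => hpoint a
      _ = 9 * (6 * ∑ v, f v - 8) := by rw [sum_const, card_univ, Fintype.card_fin, nsmul_eq_mul, Nat.cast_ofNat]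
  by_contra! hlt
  have hnonpos : 2 * ∑ v, f v ≤ 0 := htotal ▸ sum_nonpos fun a _ => by linarith [hpoint a]
  omega

/-- Its weight is `15 · 1 + 3 · 2 - 18 · 1 = 3`. -/
def kneser92Witness (v : {s : Finset (Fin 9) // s.card = 2}) : ℤ :=
  if v.1 ⊆ {6, 7, 8} then 2 else if Disjoint v.1 {6, 7, 8} then 1 else -1

theorem isSRDF_kneser92Witness : IsSRDF (kneserGraph 9 2) kneser92Witness := by
  refine ⟨by decide, by decide, fun v => ?_⟩
  rw [filter_congr_decidable]
  revert v
  decide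

theorem sum_kneser92Witness : ∑ v, kneser92Witness v = 3 := by decide

theorem kneser92_signedRomanDomNum : signedRomanDomNum (kneserGraph 9 2) = 3 := by
  refine IsLeast.csInf_eq ⟨⟨kneser92Witness, isSRDF_kneser92Witness, sum_kneser92Witness⟩, ?_⟩
  rintro w ⟨f, hf, rfl⟩
  exact hf.three_le_sum
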